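/- arXiv:2202.09991 — 2 statements merged into one kernel-verified Lean document; each statement's English description precedes it below -/
import Mathlib

section
/- Let a,b ∈ ℝ^d and let P = (a = p₀, p₁, …, p_m = b) be a polygonal ab-path with total length at most (1+ε)‖ab‖, where 0 < ε < 1. For an integer i with 1 ≤ i ≤ ⌊1/√ε⌋, let E(i√ε) be the set of edges e of P whose direction makes an angle at most i·√ε with the direction of the vector b−a. Then the total length of the edges in E(i√ε) is at least (1 − 2/i²)·‖ab‖. -/
/-- Total length of a polygonal path (sum of distances between consecutive
vertices). -/
noncomputable def pathWeight {X : Type*} [MetricSpace X] : List X → ℝ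
  | [] => 0
  | [_] => 0
  | a :: b :: rest => dist a b + pathWeight (b :: rest)

open Classical in
/-- Total length of the edges of the path `p` whose direction makes an angle at
most `θ` with the direction `w`. -/
noncomputable def alignedLen {d : ℕ} (p : List (EuclideanSpace ℝ (Fin d)))
    (w : EuclideanSpace ℝ (Fin d)) (θ : ℝ) : ℝ :=
  ((p.zip p.tail).map (fun q =>
    if InnerProductGeometry.angle (q.2 - q.1) w ≤ θ then dist q.1 q.2 else 0)).sum

/-!
Project the path onto `w = b - a`. The projections `⟪p_j - p_{j-1}, w⟫` telescope to `‖w‖²`, and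
each is at most `‖w‖` times the edge length, or `cos θ` times that for an edge at angle `> θ`.
Hence `‖w‖ ≤ cos θ · length + (1 - cos θ) · (aligned length)`. With `length ≤ (1 + ε)‖w‖` and the
Taylor bound `θ² cos θ ≤ 2 (1 - cos θ)` at `θ = i√ε ≤ 1`, this rearranges to the claim.
-/

open Real InnerProductGeometry

theorem Real.sq_mul_cos_le_two_mul_one_sub_cos {θ : ℝ} (h0 : 0 ≤ θ) (h1 : θ ≤ 1) :
    θ ^ 2 * cos θ ≤ 2 * (1 - cos θ) := by
  have hTaylor := (abs_le.mp (abs_of_nonneg h0 ▸ cos_bound (abs_of_nonneg h0 ▸ h1))).2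
  have h2 : θ ^ 2 ≤ 1 := pow_le_one₀ h0 h1
  nlinarith [sq_nonneg θ, pow_nonneg h0 4, mul_nonneg (pow_nonneg h0 4) (sub_nonneg.2 h2)]

theorem List.sum_map_zip_tail_sub {α M : Type*} [AddCommGroup M] (f : α → M) :
    ∀ {p : List α} {a b : α}, p.head? = some a → p.getLast? = some b →
      ((p.zip p.tail).map fun q => f q.2 - f q.1).sum = f b - f a
  | [x], a, b, ha, hb => by simp_all
  | x :: y :: t, a, b, ha, hb => by
    obtain rfl : x = a := by simpa using ha
    have ih := sum_map_zip_tail_sub f (p := y :: t) rfl (by simpa using hb)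
    simp only [List.tail_cons, List.zip_cons_cons, List.map_cons, List.sum_cons] at ih ⊢
    rw [ih]
    abel

theorem pathWeight_eq_sum {X : Type*} [MetricSpace X] :
    ∀ p : List X, pathWeight p = ((p.zip p.tail).map fun q => dist q.1 q.2).sum
  | [] => rfl
  | [_] => rfl
  | a :: b :: rest => by
    rw [pathWeight, pathWeight_eq_sum (b :: rest)]
    simp

theorem pathWeight_nonneg {X : Type*} [MetricSpace X] (p : List X) : 0 ≤ pathWeight p := by
  rw [pathWeight_eq_sum]
  exact List.sum_nonneg fun _ hx => by
    obtain ⟨_, _, rfl⟩ := List.mem_map.1 hx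
    exact dist_nonneg

theorem alignedLen_nonneg {d : ℕ} (p : List (EuclideanSpace ℝ (Fin d)))
    (w : EuclideanSpace ℝ (Fin d)) (θ : ℝ) : 0 ≤ alignedLen p w θ :=
  List.sum_nonneg fun _ hx => by
    obtain ⟨_, _, rfl⟩ := List.mem_map.1 hx
    split_ifs
    exacts [dist_nonneg, le_rfl]

theorem InnerProductGeometry.inner_le_cos_mul_of_le_angle {V : Type*}
    [NormedAddCommGroup V] [InnerProductSpace ℝ V] {x y : V} {θ : ℝ} (h0 : 0 ≤ θ)
    (h : θ ≤ angle x y) : inner ℝ x y ≤ cos θ * (‖x‖ * ‖y‖) := by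
  rw [← cos_angle_mul_norm_mul_norm]
  gcongr
  exact cos_le_cos_of_nonneg_of_le_pi h0 (angle_le_pi x y) h

open Classical in
theorem InnerProductGeometry.inner_le_norm_mul_cos_mul_add {V : Type*}
    [NormedAddCommGroup V] [InnerProductSpace ℝ V] (x y : V) {θ : ℝ} (h0 : 0 ≤ θ) :
    inner ℝ x y ≤
      ‖y‖ * (cos θ * ‖x‖ + (1 - cos θ) * if angle x y ≤ θ then ‖x‖ else 0) := by
  split_ifs with h
  · linarith [real_inner_le_norm x y, mul_comm ‖x‖ ‖y‖]
  · linarith [inner_le_cos_mul_of_le_angle h0 (not_le.1 h).le, mul_comm ‖x‖ ‖y‖,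
      mul_assoc (cos θ) ‖x‖ ‖y‖, mul_comm (cos θ * ‖x‖) ‖y‖]

theorem dist_le_cos_mul_pathWeight_add {d : ℕ} {a b : EuclideanSpace ℝ (Fin d)}
    {p : List (EuclideanSpace ℝ (Fin d))} (hhead : p.head? = some a)
    (hlast : p.getLast? = some b) {θ : ℝ} (h0 : 0 ≤ θ) (hπ : θ ≤ π / 2) :
    dist a b ≤ cos θ * pathWeight p + (1 - cos θ) * alignedLen p (b - a) θ := by
  have hc0 : 0 ≤ cos θ := cos_nonneg_of_neg_pi_div_two_le_of_le (by linarith [pi_pos]) hπ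
  rcases (dist_nonneg : 0 ≤ dist a b).eq_or_lt with hab | hab
  · rw [← hab]
    have := alignedLen_nonneg p (b - a) θ
    have := pathWeight_nonneg p
    have := cos_le_one θ
    positivity
  set w := b - a
  have hw : dist a b = ‖w‖ := dist_eq_norm' a b
  rw [hw] at hab ⊢
  refine le_of_mul_le_mul_left ?_ hab
  calc ‖w‖ * ‖w‖ = inner ℝ w w := (real_inner_self_eq_norm_mul_norm w).symm
    _ = ((p.zip p.tail).map fun q => inner ℝ q.2 w - inner ℝ q.1 w).sum := by
      rw [List.sum_map_zip_tail_sub (fun x => inner ℝ x w) hhead hlast, ← inner_sub_left]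
    _ ≤ ((p.zip p.tail).map fun q => ‖w‖ * (cos θ * dist q.1 q.2 + (1 - cos θ) *
          if angle (q.2 - q.1) w ≤ θ then dist q.1 q.2 else 0)).sum := by
      refine List.sum_le_sum fun q _ => ?_
      rw [← inner_sub_left, dist_eq_norm']
      exact inner_le_norm_mul_cos_mul_add _ w h0
    _ = ‖w‖ * (cos θ * pathWeight p + (1 - cos θ) * alignedLen p w θ) := by
      simp only [List.sum_map_mul_left, List.sum_map_add, pathWeight_eq_sum, alignedLen]

theorem aligned_edges_length_general {d : ℕ} (ε : ℝ) (hε0 : 0 < ε)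
    (a b : EuclideanSpace ℝ (Fin d)) (p : List (EuclideanSpace ℝ (Fin d)))
    (i : ℕ) (hi1 : 1 ≤ i) (hi2 : (i : ℝ) ≤ 1 / Real.sqrt ε)
    (hhead : p.head? = some a) (hlast : p.getLast? = some b)
    (hlen : pathWeight p ≤ (1 + ε) * dist a b) :
    (1 - 2 / (i : ℝ) ^ 2) * dist a b ≤
      alignedLen p (b - a) ((i : ℝ) * Real.sqrt ε) := by
  set θ := (i : ℝ) * √ε with hθ
  have hs : 0 < √ε := Real.sqrt_pos.2 hε0
  have hi : (1 : ℝ) ≤ i := by exact_mod_cast hi1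
  have hθ0 : 0 < θ := mul_pos (one_pos.trans_le hi) hs
  have hθ1 : θ ≤ 1 := (le_div_iff₀ hs).1 hi2
  have hθsq : θ ^ 2 = (i : ℝ) ^ 2 * ε := by rw [hθ, mul_pow, Real.sq_sqrt hε0.le]
  have hproj := dist_le_cos_mul_pathWeight_add hhead hlast hθ0.le
    (hθ1.trans (by linarith [pi_gt_three]))
  have hcos : (i : ℝ) ^ 2 * ε * cos θ ≤ 2 * (1 - cos θ) :=
    hθsq ▸ sq_mul_cos_le_two_mul_one_sub_cos hθ0.le hθ1
  have hc0 : 0 < cos θ := cos_pos_of_mem_Ioo ⟨by linarith [pi_pos], by linarith [pi_gt_three]⟩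
  have hc1 : cos θ < 1 := by
    linarith [mul_pos (mul_pos (by positivity : (0 : ℝ) < (i : ℝ) ^ 2) hε0) hc0]
  have hεc : ε * cos θ ≤ 2 * (1 - cos θ) / (i : ℝ) ^ 2 := by
    rw [le_div_iff₀ (by positivity)]
    linarith
  refine le_of_mul_le_mul_left ?_ (sub_pos.2 hc1)
  calc (1 - cos θ) * ((1 - 2 / (i : ℝ) ^ 2) * dist a b)
      = (1 - cos θ) * dist a b - 2 * (1 - cos θ) / (i : ℝ) ^ 2 * dist a b := by ring
    _ ≤ (1 - cos θ) * dist a b - ε * cos θ * dist a b := by gcongr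
    _ = dist a b - cos θ * ((1 + ε) * dist a b) := by ring
    _ ≤ dist a b - cos θ * pathWeight p := by gcongr
    _ ≤ (1 - cos θ) * alignedLen p (b - a) θ := by linarith

/-- Let `P = (a = p₀, …, p_m = b)` be a polygonal `ab`-path of total length at
most `(1+ε)‖ab‖`, with `0 < ε < 1`. For `1 ≤ i ≤ 1/√ε`, the total length of the
edges making an angle at most `i√ε` with the direction of `b − a` is at least
`(1 − 2/i²)·‖ab‖`. -/
theorem aligned_edges_length {d : ℕ} (ε : ℝ) (hε0 : 0 < ε) (hε1 : ε < 1)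
    (a b : EuclideanSpace ℝ (Fin d)) (p : List (EuclideanSpace ℝ (Fin d)))
    (i : ℕ) (hi1 : 1 ≤ i) (hi2 : (i : ℝ) ≤ 1 / Real.sqrt ε)
    (hhead : p.head? = some a) (hlast : p.getLast? = some b)
    (hlen : pathWeight p ≤ (1 + ε) * dist a b) :
    (1 - 2 / (i : ℝ) ^ 2) * dist a b ≤
      alignedLen p (b - a) ((i : ℝ) * Real.sqrt ε) :=
  aligned_edges_length_general ε hε0 a b p i hi1 hi2 hhead hlast hlen
end

section
/- Let (X,d) be a finite ultrametric, and consider the spanning tree H produced online by connecting each arriving point to the earliest-arrived among its nearest neighbors in the current point set. Then H is a minimum spanning tree of the complete weighted graph on X with weights d. -/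
/-!
Induct on the number of points, deleting the last arrival `x` from a connected graph `T`.
Let `u` be the `T`-neighbour of `x` closest to `x`. Contracting the edge `x u` keeps the graph
connected, and it lowers the weight by at least `d u x ≥ d (parent x) x`: each other neighbour
`v` of `x` is reattached to `u` at cost `d u v ≤ max (d u x) (d x v) = d x v`.
-/

open Finset SimpleGraph Function

namespace SimpleGraph

variable {V W : Type*}

theorem sum_incidenceFinset_eq_sum_neighborFinset {M : Type*} [AddCommMonoid M] [DecidableEq V]
    (G : SimpleGraph V) (v : V) [Fintype (G.neighborSet v)] (g : Sym2 V → M) :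
    ∑ e ∈ G.incidenceFinset v, g e = ∑ w ∈ G.neighborFinset v, g s(v, w) := by
  have himage : G.incidenceFinset v = (G.neighborFinset v).image (s(v, ·)) := by
    ext e
    induction e using Sym2.ind with
    | _ a b =>
      simp only [mem_incidenceFinset, mk'_mem_incidenceSet_iff, mem_image, mem_neighborFinset]
      constructor
      · rintro ⟨hab, rfl | rfl⟩
        · exact ⟨b, hab, rfl⟩
        · exact ⟨a, hab.symm, Sym2.eq_swap⟩
      · rintro ⟨w, hw, he⟩
        rcases Sym2.eq_iff.mp he with ⟨rfl, rfl⟩ | ⟨rfl, rfl⟩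
        exacts [⟨hw, .inl rfl⟩, ⟨hw.symm, .inr rfl⟩]
  rw [himage, sum_image fun _ _ _ _ h => Sym2.congr_right.mp h]

/-- The contraction of the edge `x u` of `T` (merging `x` into `u`), on a vertex type `W`
that `f` identifies with the vertices other than `x`. -/
def contractEdge (T : SimpleGraph V) (f : W → V) (x u : V) : SimpleGraph W :=
  fromRel fun a b => T.Adj (f a) (f b) ∨ (f a = u ∧ T.Adj x (f b))

theorem Connected.contractEdge {T : SimpleGraph V} (hT : T.Connected) {f : W → V}
    (hf : Injective f) {x u : V} (hfx : ∀ a, f a ≠ x)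
    (hsurj : ∀ v, v ≠ x → ∃ a, f a = v) (hxu : T.Adj x u) :
    (T.contractEdge f x u).Connected := by
  classical
  obtain ⟨a₀, -⟩ := hsurj u hxu.ne'
  have : Nonempty W := ⟨a₀⟩
  let proj : V → W := fun v => invFun f (if v = x then u else v)
  have hproj : ∀ v, f (proj v) = if v = x then u else v := fun v =>
    invFun_eq (by split_ifs with h; exacts [hsurj u hxu.ne', hsurj v h])
  have hproj_f : ∀ a, proj (f a) = a := fun a => hf (by rw [hproj, if_neg (hfx a)])
  have hstep : ∀ a b, T.Adj a b → (T.contractEdge f x u).Reachable (proj a) (proj b) := by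
    intro a b hab
    by_cases hne : proj a = proj b
    · rw [hne]
    refine Adj.reachable ((fromRel_adj _ _ _).2 ⟨hne, ?_⟩)
    simp only [hproj]
    by_cases ha : a = x <;> by_cases hb : b = x <;> simp_all [adj_comm]
  refine ⟨fun a b => ?_⟩
  rw [← hproj_f a, ← hproj_f b, reachable_iff_reflTransGen]
  exact Relation.ReflTransGen.lift' proj
    (fun _ _ h => (reachable_iff_reflTransGen _ _).1 (hstep _ _ h)) _ _
    ((reachable_iff_reflTransGen _ _).1 (hT.preconnected (f a) (f b)))

theorem image_map_edgeFinset_contractEdge_subset [Fintype V] [DecidableEq V]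
    {T : SimpleGraph V} [DecidableRel T.Adj] {f : W → V} {x u : V}
    [Fintype (T.contractEdge f x u).edgeSet] (hf : Injective f) (hfx : ∀ a, f a ≠ x) :
    (T.contractEdge f x u).edgeFinset.image (Sym2.map f)
      ⊆ {e ∈ T.edgeFinset | x ∉ e} ∪ ((T.neighborFinset x).erase u).image (s(u, ·)) := by
  have memE₀ : ∀ {c c' : W}, T.Adj (f c) (f c') →
      s(f c, f c') ∈ {e ∈ T.edgeFinset | x ∉ e} := fun h =>
    mem_filter.2 ⟨(mem_edgeFinset).2 h, by simp [Sym2.mem_iff, (hfx _).symm]⟩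
  have memG : ∀ {c c' : W}, c ≠ c' → f c = u → T.Adj x (f c') →
      s(f c, f c') ∈ ((T.neighborFinset x).erase u).image (s(u, ·)) := by
    intro c c' hcc' hu h
    rw [hu]
    exact mem_image_of_mem _
      (mem_erase.2 ⟨hu ▸ (hf.ne hcc').symm, (mem_neighborFinset _ _ _).2 h⟩)
  refine image_subset_iff.2 fun e he => ?_
  induction e using Sym2.ind with
  | _ a b =>
    rw [mem_edgeFinset, mem_edgeSet, contractEdge, fromRel_adj] at he
    obtain ⟨hab, hr⟩ := he
    rw [Sym2.map_mk, mem_union]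
    rcases hr with (h | ⟨hu, h⟩) | (h | ⟨hu, h⟩)
    · exact .inl (memE₀ h)
    · exact .inr (memG hab hu h)
    · exact .inl (Sym2.eq_swap ▸ memE₀ h)
    · exact .inr (Sym2.eq_swap ▸ memG hab.symm hu h)

theorem sum_edgeFinset_contractEdge_add_le [Fintype V] [DecidableEq V] {T : SimpleGraph V}
    [DecidableRel T.Adj] {f : W → V} {x u : V} [Fintype (T.contractEdge f x u).edgeSet]
    (d : V → V → ℝ) (hsymm : ∀ a b, d a b = d b a) (hnonneg : ∀ a b, 0 ≤ d a b)
    (hult : ∀ a b c, d a c ≤ max (d a b) (d b c)) (hf : Injective f) (hfx : ∀ a, f a ≠ x)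
    (hxu : T.Adj x u) (hmin : ∀ v, T.Adj x v → d u x ≤ d v x) :
    ∑ e ∈ (T.contractEdge f x u).edgeFinset,
        Sym2.lift ⟨fun a b => d (f a) (f b), fun _ _ => hsymm _ _⟩ e + d u x
      ≤ ∑ e ∈ T.edgeFinset, Sym2.lift ⟨d, hsymm⟩ e := by
  set w := Sym2.lift ⟨d, hsymm⟩
  have hw : ∀ e, 0 ≤ w e := Sym2.ind hnonneg
  set E₀ := {e ∈ T.edgeFinset | x ∉ e}
  set N := T.neighborFinset x
  set G := (N.erase u).image (s(u, ·))
  have hT : ∑ e ∈ T.edgeFinset, w e = ∑ e ∈ E₀, w e + ∑ v ∈ N, d v x := by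
    rw [← sum_filter_not_add_sum_filter _ (x ∈ ·), ← incidenceFinset_eq_filter,
      sum_incidenceFinset_eq_sum_neighborFinset]
    simp only [w, Sym2.lift_mk, hsymm x]
    rfl
  have hG : ∑ e ∈ G, w e ≤ ∑ v ∈ N.erase u, d v x := by
    refine (sum_image_le_of_nonneg fun e _ => hw e).trans (sum_le_sum fun v hv => ?_)
    have hv : T.Adj x v := (mem_neighborFinset _ _ _).1 (mem_of_mem_erase hv)
    calc w s(u, v) = d u v := rfl
      _ ≤ max (d u x) (d x v) := hult u x v
      _ = d v x := by rw [hsymm x v, max_eq_right (hmin v hv)]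
  have hsub := image_map_edgeFinset_contractEdge_subset (T := T) (u := u) hf hfx
  calc ∑ e ∈ (T.contractEdge f x u).edgeFinset,
        Sym2.lift ⟨fun a b => d (f a) (f b), fun _ _ => hsymm _ _⟩ e + d u x
      = ∑ e ∈ (T.contractEdge f x u).edgeFinset.image (Sym2.map f), w e + d u x := by
        rw [sum_image fun _ _ _ _ h => Sym2.map.injective hf h]
        congr 1
        refine sum_congr rfl fun e _ => ?_
        induction e using Sym2.ind with
        | _ a b => rfl
    _ ≤ ∑ e ∈ E₀ ∪ G, w e + d u x := by
        gcongr
        exact fun e _ _ => hw e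
    _ ≤ ∑ e ∈ E₀, w e + ∑ e ∈ G, w e + d u x := by
        have := sum_union_inter (s₁ := E₀) (s₂ := G) (f := w)
        have := sum_nonneg fun e (_ : e ∈ E₀ ∩ G) => hw e
        linarith
    _ ≤ ∑ e ∈ E₀, w e + ∑ v ∈ N.erase u, d v x + d u x := by gcongr
    _ = ∑ e ∈ T.edgeFinset, w e := by
        rw [hT, add_assoc, sum_erase_add _ _ ((mem_neighborFinset _ _ _).2 hxu)]

end SimpleGraph

theorem nonneg_of_ultrametric {X : Type*} {d : X → X → ℝ} (hsymm : ∀ u v, d u v = d v u)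
    (hself : ∀ u, d u u = 0) (hult : ∀ x y z, d x z ≤ max (d x y) (d y z)) (u v : X) :
    0 ≤ d u v := by
  simpa [hself, hsymm v u] using hult u v u

theorem Fin.sum_filter_pos_castSucc {M : Type*} [AddCommMonoid M] {n : ℕ} (hn : 0 < n)
    (c : Fin (n + 1) → M) :
    ∑ i ∈ univ.filter (fun i : Fin (n + 1) => 0 < (i : ℕ)), c i
      = ∑ i ∈ univ.filter (fun i : Fin n => 0 < (i : ℕ)), c i.castSucc + c (Fin.last n) := by
  rw [sum_filter, sum_filter, Fin.sum_univ_castSucc]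
  simp only [Fin.val_castSucc, Fin.val_last, if_pos hn]

theorem sum_le_sum_edgeFinset_of_ultrametric {n : ℕ} (d : Fin n → Fin n → ℝ)
    (hsymm : ∀ u v, d u v = d v u) (hnonneg : ∀ u v, 0 ≤ d u v)
    (hult : ∀ x y z, d x z ≤ max (d x y) (d y z)) (c : Fin n → ℝ)
    (hc : ∀ i j, j < i → c i ≤ d j i) (T : SimpleGraph (Fin n)) [DecidableRel T.Adj]
    (hT : T.Connected) :
    ∑ i ∈ univ.filter (fun i : Fin n => 0 < (i : ℕ)), c i
      ≤ ∑ e ∈ T.edgeFinset, Sym2.lift ⟨d, hsymm⟩ e := by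
  induction n with
  | zero =>
    rw [univ_eq_empty, filter_empty, sum_empty]
    exact sum_nonneg fun e _ => Sym2.ind hnonneg e
  | succ n ih =>
    obtain rfl | hn := n.eq_zero_or_pos
    · rw [filter_false_of_mem fun i _ => by simp, sum_empty]
      exact sum_nonneg fun e _ => Sym2.ind hnonneg e
    classical
    set x := Fin.last n
    have : Nontrivial (Fin (n + 1)) := Fin.nontrivial_iff_two_le.2 (by omega)
    obtain ⟨v, hv⟩ := hT.preconnected.exists_adj_of_nontrivial x
    obtain ⟨u, hu, hmin⟩ :=
      (T.neighborFinset x).exists_min_image (d · x) ⟨v, (mem_neighborFinset _ _ _).2 hv⟩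
    rw [mem_neighborFinset] at hu
    have hf := Fin.castSucc_injective n
    have hfx : ∀ a : Fin n, a.castSucc ≠ x := Fin.castSucc_ne_last
    calc ∑ i ∈ univ.filter (fun i : Fin (n + 1) => 0 < (i : ℕ)), c i
        = ∑ i ∈ univ.filter (fun i : Fin n => 0 < (i : ℕ)), c i.castSucc + c x :=
          Fin.sum_filter_pos_castSucc hn c
      _ ≤ ∑ e ∈ (T.contractEdge Fin.castSucc x u).edgeFinset,
            Sym2.lift ⟨fun a b => d a.castSucc b.castSucc, fun _ _ => hsymm _ _⟩ e + d u x :=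
          add_le_add
            (ih (fun a b => d a.castSucc b.castSucc) (fun _ _ => hsymm _ _)
              (fun _ _ => hnonneg _ _) (fun _ _ _ => hult _ _ _) (fun i => c i.castSucc)
              (fun i j hij => hc _ _ (Fin.castSucc_lt_castSucc_iff.2 hij)) _
              (hT.contractEdge hf hfx (fun _ => Fin.exists_castSucc_eq.2) hu))
            (hc x u (Fin.lt_last_iff_ne_last.2 hu.ne'))
      _ ≤ ∑ e ∈ T.edgeFinset, Sym2.lift ⟨d, hsymm⟩ e :=
          sum_edgeFinset_contractEdge_add_le d hsymm hnonneg hult hf hfx hu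
            fun v hv => hmin v ((mem_neighborFinset _ _ _).2 hv)

theorem connected_fromRel_parent {n : ℕ} (hn : 0 < n) (parent : Fin n → Fin n)
    (hlt : ∀ i : Fin n, 0 < (i : ℕ) → parent i < i) :
    (fromRel fun (u v : Fin n) => 0 < (u : ℕ) ∧ parent u = v).Connected := by
  refine (connected_iff_exists_forall_reachable _).2 ⟨⟨0, hn⟩, fun i => ?_⟩
  induction i using WellFoundedLT.induction with
  | _ i ih =>
    by_cases hi : 0 < (i : ℕ)
    · exact (ih _ (hlt i hi)).trans
        (Adj.reachable ((fromRel_adj _ _ _).2 ⟨(hlt i hi).ne, .inr ⟨hi, rfl⟩⟩))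
    · obtain rfl : i = ⟨0, hn⟩ := Fin.ext (Nat.eq_zero_of_not_pos hi)
      rfl

theorem ultrametric_online_tree_is_mst_general (n : ℕ) (d : Fin n → Fin n → ℝ)
    (hsymm : ∀ u v, d u v = d v u) (hself : ∀ u, d u u = 0)
    (hult : ∀ x y z, d x z ≤ max (d x y) (d y z))
    (parent : Fin n → Fin n)
    (hpar : ∀ i : Fin n, 0 < (i : ℕ) →
      parent i < i ∧ (∀ j : Fin n, j < i → d (parent i) i ≤ d j i) ∧
        (∀ j : Fin n, j < i → d j i = d (parent i) i → parent i ≤ j)) :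
    (0 < n → (SimpleGraph.fromRel
        (fun (u v : Fin n) => 0 < (u : ℕ) ∧ parent u = v)).Connected) ∧
      ∀ (T : SimpleGraph (Fin n)), ∀ (_ : DecidableRel T.Adj), T.Connected →
        (∑ i ∈ Finset.univ.filter (fun i : Fin n => 0 < (i : ℕ)), d (parent i) i)
          ≤ ∑ e ∈ T.edgeFinset, Sym2.lift ⟨d, hsymm⟩ e :=
  ⟨fun hn => connected_fromRel_parent hn parent fun i hi => (hpar i hi).1,
    fun T _ hT => sum_le_sum_edgeFinset_of_ultrametric d hsymm
      (nonneg_of_ultrametric hsymm hself hult) hult (fun i => d (parent i) i)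
      (fun i j hji => (hpar i ((Nat.zero_le _).trans_lt hji)).2.1 j hji) T hT⟩

/-- Let `d` be an ultrametric on `n` points arriving in index order, and let `H`
be the spanning tree produced online by connecting each arriving point `i`
(other than the first) to the earliest-arrived among its nearest earlier
neighbors, `parent i`. Then `H` is a minimum spanning tree: `H` is connected,
and its total weight is at most that of any connected graph on the points. -/
theorem ultrametric_online_tree_is_mst (n : ℕ) (d : Fin n → Fin n → ℝ)
    (hsymm : ∀ u v, d u v = d v u) (hself : ∀ u, d u u = 0)
    (hpos : ∀ u v, u ≠ v → 0 < d u v)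
    (hult : ∀ x y z, d x z ≤ max (d x y) (d y z))
    (parent : Fin n → Fin n)
    (hpar : ∀ i : Fin n, 0 < (i : ℕ) →
      parent i < i ∧ (∀ j : Fin n, j < i → d (parent i) i ≤ d j i) ∧
        (∀ j : Fin n, j < i → d j i = d (parent i) i → parent i ≤ j)) :
    (0 < n → (SimpleGraph.fromRel
        (fun (u v : Fin n) => 0 < (u : ℕ) ∧ parent u = v)).Connected) ∧
      ∀ (T : SimpleGraph (Fin n)), ∀ (_ : DecidableRel T.Adj), T.Connected →
        (∑ i ∈ Finset.univ.filter (fun i : Fin n => 0 < (i : ℕ)), d (parent i) i)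
          ≤ ∑ e ∈ T.edgeFinset, Sym2.lift ⟨d, hsymm⟩ e :=
  ultrametric_online_tree_is_mst_general n d hsymm hself hult parent hpar
end
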